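/- Let λ be a partition of n and let I_λ be the ℂ-linear span in R = ℂ[x,y] of the monomials x^a y^b with b ≥ λ_{a+1}, where λ_1 ≥ λ_2 ≥ … are the parts of λ extended by zeros (i.e. the monomials whose cell (a,b) lies outside the Young diagram {(a,b) ∈ ℕ² : b < λ_{a+1}} of λ). Then I_λ is an ideal of R, dim_ℂ R/I_λ = n, and dim_ℂ I_λ/(𝔪·I_λ) = d(λ) + 1, where d(λ) is the number of distinct part sizes of λ. That is, the minimal number of generators of the monomial ideal I_λ equals the number of concave corners of the Young diagram of λ. -/

import Mathlib

/-!
The exponents of the monomials in `I_λ` form the upper set `S = {(a, b) | #{parts > b} ≤ a}` of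
`ℕ²`, so `I_λ` is the monomial ideal `I_S`, and the monomials of the Young diagram `ℕ² \ S` form a
basis of `R ⧸ I_S`; counting them column by column gives `∑_b #{parts > b} = n`. The ideal `𝔪 I_S`
is the monomial ideal of `(ℕ² \ {0}) + S`, which is `S` minus its minimal elements, so `I_S/𝔪 I_S`
has a basis indexed by the minimal elements of `S`: the corners `(#{parts > b}, b)` with `b = 0` or
`b` a part size.
-/

open MvPolynomial

noncomputable section

/-- The polynomial ring `R = ℂ[x,y]`. -/
abbrev Rpoly : Type := MvPolynomial (Fin 2) ℂ

/-- The maximal ideal `𝔪 = ⟨x, y⟩` of `R` at the origin. -/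
def mIdeal : Ideal Rpoly := Ideal.span {X 0, X 1}

/-- `μ(I) = dim_ℂ I/(𝔪·I)`, computed as the ℂ-dimension of the image of `I`
in `R/(𝔪·I)`. -/
noncomputable def mu (I : Ideal Rpoly) : ℕ :=
  Module.finrank ℂ
    (Submodule.restrictScalars ℂ (I.map (Ideal.Quotient.mk (mIdeal * I))))

/-- The ℂ-linear span `I_λ` of the monomials `x^a y^b` with `b ≥ λ_{a+1}`, i.e. those
whose cell `(a,b)` lies outside the Young diagram of `λ`.  Here `b ≥ λ_{a+1}` is
expressed equivalently as: the number of parts of `λ` exceeding `b` is at most `a`. -/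
noncomputable def youngSpan (n : ℕ) (lam : n.Partition) : Submodule ℂ Rpoly :=
  Submodule.span ℂ {p : Rpoly | ∃ a b : ℕ,
    Multiset.card (lam.parts.filter (fun s => b < s)) ≤ a ∧ p = X 0 ^ a * X 1 ^ b}

open Pointwise

lemma Set.ncard_preimage_equiv {α β F : Type*} [EquivLike F α β] (e : F) (s : Set β) :
    (e ⁻¹' s).ncard = s.ncard :=
  Set.ncard_preimage_of_injective_subset_range (EquivLike.injective e)
    fun b _ => EquivLike.surjective e b

lemma OrderIso.setOf_minimal_mem_preimage {α β : Type*} [Preorder α] [Preorder β] (e : α ≃o β)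
    (s : Set β) : {a | Minimal (· ∈ e ⁻¹' s) a} = e ⁻¹' {b | Minimal (· ∈ s) b} := by
  ext a
  exact (e.toOrderEmbedding.minimal_apply_mem_iff fun b _ => e.surjective b).symm

def Finsupp.finTwoOrderIso (M : Type*) [Zero M] [Preorder M] : (Fin 2 →₀ M) ≃o M × M :=
  Finsupp.orderIsoFunOnFinite.trans (OrderIso.finTwoArrowIso M)

@[simp]
lemma Finsupp.finTwoOrderIso_apply {M : Type*} [Zero M] [Preorder M] (d : Fin 2 →₀ M) :
    finTwoOrderIso M d = (d 0, d 1) :=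
  rfl

namespace MvPolynomial

section restrictSupport

variable {σ R : Type*} [CommSemiring R]

lemma restrictSupport_union (s t : Set (σ →₀ ℕ)) :
    restrictSupport R (s ∪ t) = restrictSupport R s ⊔ restrictSupport R t := by
  simp only [restrictSupport_eq_span, Set.image_union, Submodule.span_union]

lemma disjoint_restrictSupport {s t : Set (σ →₀ ℕ)} (h : Disjoint s t) :
    Disjoint (restrictSupport R s) (restrictSupport R t) := by
  refine (Submodule.disjoint_def).2 fun p hs ht => ?_
  rw [← support_eq_empty, Finset.eq_empty_iff_forall_notMem]
  exact fun d hd => h.notMem_of_mem_left (hs hd) (ht hd)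

end restrictSupport

variable {σ K : Type*} [Field K]

lemma finrank_restrictSupport {s : Set (σ →₀ ℕ)} (hs : s.Finite) :
    Module.finrank K (restrictSupport K s) = s.ncard := by
  have := hs.to_subtype
  rw [Module.finrank_eq_nat_card_basis (basisRestrictSupport K s), Nat.card_coe_set_eq]

lemma finrank_map_restrictSupport {M : Type*} [AddCommGroup M] [Module K M]
    (f : MvPolynomial σ K →ₗ[K] M) {S T : Set (σ →₀ ℕ)}
    (hf : LinearMap.ker f = restrictSupport K T) (hTS : T ⊆ S) (hfin : (S \ T).Finite) :
    Module.finrank K ((restrictSupport K S).map f) = (S \ T).ncard := by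
  set W := restrictSupport K (S \ T)
  have hinj : Function.Injective (f.domRestrict W) := by
    rw [← LinearMap.ker_eq_bot, LinearMap.ker_domRestrict, ← Submodule.disjoint_iff_comap_eq_bot,
      hf]
    exact disjoint_restrictSupport Set.disjoint_sdiff_left
  have hsplit : restrictSupport K S = restrictSupport K T ⊔ W := by
    rw [← restrictSupport_union, Set.union_sdiff_cancel hTS]
  rw [hsplit, Submodule.map_sup,
    LinearMap.le_ker_iff_map.1 hf.ge, bot_sup_eq, ← LinearMap.range_domRestrict,
    LinearMap.finrank_range_of_inj hinj, finrank_restrictSupport hfin]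

lemma ker_mkₐ_toLinearMap (I : Ideal (MvPolynomial σ K)) :
    LinearMap.ker (Ideal.Quotient.mkₐ K I).toLinearMap = I.restrictScalars K := by
  ext p
  simp [Ideal.Quotient.eq_zero_iff_mem]

theorem finrank_quotient_restrictSupportIdeal {S : Set (σ →₀ ℕ)} (hS : IsUpperSet S)
    (hfin : Sᶜ.Finite) :
    Module.finrank K (MvPolynomial σ K ⧸ restrictSupportIdeal K S hS) = Sᶜ.ncard := by
  have h := finrank_map_restrictSupport (Ideal.Quotient.mkₐ K (restrictSupportIdeal K S hS)).toLinearMap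
    (ker_mkₐ_toLinearMap _) (Set.subset_univ S) (by rwa [← Set.compl_eq_univ_sdiff])
  rwa [restrictSupport_univ, Submodule.map_top, LinearMap.range_eq_top.2
    (Ideal.Quotient.mkₐ_surjective K _), finrank_top, ← Set.compl_eq_univ_sdiff] at h

theorem diff_degree_pos_add_eq_setOf_minimal (S : Set (σ →₀ ℕ)) :
    S \ (Finsupp.degree ⁻¹' Set.Ici 1 + S) = {d | Minimal (· ∈ S) d} := by
  ext d
  have : d ∈ Finsupp.degree ⁻¹' Set.Ici 1 + S ↔ ∃ s ∈ S, s < d := by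
    simp only [Set.mem_add, Set.mem_preimage, Set.mem_Ici, Nat.one_le_iff_ne_zero, ne_eq,
      Finsupp.degree_eq_zero_iff]
    constructor
    · rintro ⟨u, hu, s, hs, rfl⟩
      exact ⟨s, hs, lt_iff_exists_add.2 ⟨u, pos_iff_ne_zero.2 hu, add_comm _ _⟩⟩
    · rintro ⟨s, hs, hsd⟩
      obtain ⟨u, hu, rfl⟩ := lt_iff_exists_add.1 hsd
      exact ⟨u, hu.ne', s, hs, add_comm _ _⟩
  simp only [Set.mem_sdiff, this, Set.mem_ofPred_eq, minimal_iff_forall_lt, not_exists, not_and]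
  exact and_congr_right fun _ => ⟨fun h y hy hyS => h y hyS hy, fun h y hyS hy => h hy hyS⟩

theorem finrank_map_mk_idealOfVars_mul {S : Set (σ →₀ ℕ)} (hS : IsUpperSet S)
    (hfin : {d | Minimal (· ∈ S) d}.Finite) :
    Module.finrank K (((restrictSupportIdeal K S hS).map (Ideal.Quotient.mk
      (idealOfVars σ K * restrictSupportIdeal K S hS))).restrictScalars K) =
      {d | Minimal (· ∈ S) d}.ncard := by
  set J := idealOfVars σ K * restrictSupportIdeal K S hS
  have hJ : J.restrictScalars K = restrictSupport K (Finsupp.degree ⁻¹' Set.Ici 1 + S) := by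
    rw [Ideal.restrictScalars_mul, idealOfVars_eq_restrictSupportIdeal,
      restrictScalars_restrictSupportIdeal, restrictScalars_restrictSupportIdeal,
      restrictSupport_add]
  have hsub : Finsupp.degree ⁻¹' Set.Ici 1 + S ⊆ S := by
    rintro _ ⟨u, -, s, hs, rfl⟩
    exact hS le_add_self hs
  rw [← diff_degree_pos_add_eq_setOf_minimal] at hfin ⊢
  rw [Ideal.map_eq_submodule_map]
  exact finrank_map_restrictSupport (Ideal.Quotient.mkₐ K J).toLinearMap
    ((ker_mkₐ_toLinearMap J).trans hJ) hsub hfin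

end MvPolynomial


namespace Multiset

/-- The cell `(a, b)` stands for the monomial `x^a y^b`; the Young diagram of a partition `m` is
`m.outerCellsᶜ`, whose column `b` has `m.countGT b` cells (a part of the conjugate partition). -/
def countGT (m : Multiset ℕ) (b : ℕ) : ℕ := card (m.filter (b < ·))

variable (m : Multiset ℕ)

lemma countGT_antitone : Antitone m.countGT := fun _ _ h =>
  card_le_card (monotone_filter_right m fun _ hs => h.trans_lt hs)

lemma countGT_eq_countGT_succ_add_count (b : ℕ) :
    m.countGT b = m.countGT (b + 1) + m.count (b + 1) := by
  induction m using Multiset.induction_on with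
  | empty => simp [countGT]
  | cons s m ih =>
    simp only [countGT, filter_cons, count_cons] at ih ⊢
    split_ifs <;> simp_all <;> omega

def outerCells : Set (ℕ × ℕ) := {q | m.countGT q.2 ≤ q.1}

lemma isUpperSet_outerCells : IsUpperSet m.outerCells := fun _ _ h hq =>
  (m.countGT_antitone h.2).trans (hq.trans h.1)

lemma compl_outerCells : m.outerCellsᶜ =
    ↑((Finset.range m.sum).biUnion fun b => Finset.range (m.countGT b) ×ˢ {b}) := by
  ext ⟨a, b⟩
  simp only [outerCells, Set.mem_compl_iff, Set.mem_ofPred_eq, not_le, Finset.coe_biUnion,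
    Finset.coe_range, Set.mem_iUnion, Finset.coe_product, Finset.coe_singleton, Set.mem_prod,
    Set.mem_Iio, Set.mem_singleton_iff, exists_prop]
  constructor
  · intro h
    obtain ⟨s, hs⟩ := card_pos_iff_exists_mem.1 (a.zero_le.trans_lt h)
    rw [mem_filter] at hs
    exact ⟨b, hs.2.trans_le (le_sum_of_mem hs.1), h, rfl⟩
  · rintro ⟨b, -, h, rfl⟩
    exact h

lemma finite_compl_outerCells : m.outerCellsᶜ.Finite :=
  m.compl_outerCells ▸ Finset.finite_toSet _

lemma sum_range_countGT {N : ℕ} (hN : ∀ s ∈ m, s ≤ N) :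
    ∑ b ∈ Finset.range N, m.countGT b = m.sum := by
  induction m using Multiset.induction_on with
  | empty => simp [countGT]
  | cons s m ih =>
    have hcons (b : ℕ) : (s ::ₘ m).countGT b = (if b < s then 1 else 0) + m.countGT b := by
      simp only [countGT, filter_cons, card_add]
      split_ifs <;> simp
    have hs : (Finset.range N).filter (· < s) = Finset.range s := by
      ext b
      simp only [Finset.mem_filter, Finset.mem_range]
      have := hN s (mem_cons_self s m)
      omega
    rw [Finset.sum_congr rfl fun b _ => hcons b, Finset.sum_add_distrib, Finset.sum_boole, hs,
      ih fun t ht => hN t (mem_cons_of_mem ht), sum_cons]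
    simp

lemma ncard_compl_outerCells : m.outerCellsᶜ.ncard = m.sum := by
  rw [compl_outerCells, Set.ncard_coe_finset, Finset.card_biUnion]
  · simp only [Finset.card_product, Finset.card_range, Finset.card_singleton, mul_one]
    exact m.sum_range_countGT fun s hs => le_sum_of_mem hs
  · intro b _ b' _ hne
    simp only [Function.onFun, Finset.disjoint_left, Finset.mem_product, Finset.mem_singleton]
    exact fun q hq hq' => hne (hq.2.symm.trans hq'.2)

lemma minimal_mem_outerCells_iff {q : ℕ × ℕ} :
    Minimal (· ∈ m.outerCells) q ↔ q.1 = m.countGT q.2 ∧ (q.2 = 0 ∨ q.2 ∈ m) := by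
  obtain ⟨a, b⟩ := q
  simp only [Minimal, outerCells, Set.mem_ofPred_eq, Prod.forall, Prod.mk_le_mk]
  constructor
  · rintro ⟨ha, hmin⟩
    refine ⟨(hmin _ _ le_rfl ⟨ha, le_rfl⟩).1.antisymm ha, ?_⟩
    obtain _ | c := b
    · exact .inl rfl
    refine .inr (count_pos.1 (Nat.pos_of_ne_zero fun hc => ?_))
    have := m.countGT_eq_countGT_succ_add_count c
    have := hmin a c (by omega) ⟨le_rfl, c.le_succ⟩
    omega
  · rintro ⟨rfl, hb⟩
    refine ⟨le_rfl, fun a' b' ha' ⟨ha'b, hb'b⟩ => ?_⟩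
    suffices b ≤ b' by obtain rfl := hb'b.antisymm this; exact ⟨ha', le_rfl⟩
    by_contra! hlt
    obtain _ | c := b
    · omega
    have hc : 0 < m.count (c + 1) := count_pos.2 (hb.resolve_left c.succ_ne_zero)
    have := m.countGT_eq_countGT_succ_add_count c
    have := m.countGT_antitone (Nat.le_of_lt_succ hlt)
    omega

lemma setOf_minimal_mem_outerCells : {q | Minimal (· ∈ m.outerCells) q} =
    (fun b => (m.countGT b, b)) '' ↑(insert 0 m.toFinset) := by
  ext ⟨a, b⟩
  simp only [Set.mem_ofPred_eq, minimal_mem_outerCells_iff, Finset.coe_insert, Set.mem_image,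
    Set.mem_insert_iff, Finset.mem_coe, mem_toFinset, Prod.mk.injEq]
  grind

lemma finite_setOf_minimal_mem_outerCells : {q | Minimal (· ∈ m.outerCells) q}.Finite :=
  m.setOf_minimal_mem_outerCells ▸ (Finset.finite_toSet _).image _

lemma ncard_setOf_minimal_mem_outerCells (h0 : 0 ∉ m) :
    {q | Minimal (· ∈ m.outerCells) q}.ncard = m.toFinset.card + 1 := by
  rw [m.setOf_minimal_mem_outerCells, Set.ncard_image_of_injective _
    fun b b' h => (Prod.ext_iff.1 h).2, Set.ncard_coe_finset,
    Finset.card_insert_of_notMem (by simpa using h0)]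

end Multiset


lemma MvPolynomial.monomial_one_finTwo {R : Type*} [CommSemiring R] (d : Fin 2 →₀ ℕ) :
    monomial d (1 : R) = X 0 ^ d 0 * X 1 ^ d 1 := by
  rw [monomial_eq, C_1, one_mul, Finsupp.prod_fintype _ _ (by simp), Fin.prod_univ_two]

lemma youngSpan_eq (n : ℕ) (lam : n.Partition) : youngSpan n lam =
    restrictSupport ℂ (Finsupp.finTwoOrderIso ℕ ⁻¹' lam.parts.outerCells) := by
  rw [youngSpan, restrictSupport_eq_span]
  congr 1
  ext p
  simp only [Set.mem_ofPred_eq, Set.mem_image, Set.mem_preimage, monomial_one_finTwo]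
  constructor
  · rintro ⟨a, b, hab, rfl⟩
    refine ⟨Finsupp.single 0 a + Finsupp.single 1 b, ?_, by simp⟩
    simpa [Multiset.outerCells, Multiset.countGT] using hab
  · rintro ⟨d, hd, rfl⟩
    exact ⟨d 0, d 1, hd, rfl⟩

lemma mIdeal_eq_idealOfVars : mIdeal = idealOfVars (Fin 2) ℂ := by
  rw [mIdeal, idealOfVars]
  congr 1
  ext p
  simp [Fin.exists_fin_two, eq_comm]

/-- For a partition `λ` of `n`, the span `I_λ` of the monomials outside the Young
diagram of `λ` is an ideal of `R = ℂ[x,y]`, of colength `n`, whose minimal number of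
generators `μ(I_λ) = dim_ℂ I_λ/(𝔪·I_λ)` equals `d(λ) + 1`, one more than the number
of distinct part sizes of `λ` (the number of concave corners of the diagram). -/
theorem stmt14 (n : ℕ) (lam : n.Partition) :
    ∃ I : Ideal Rpoly, Submodule.restrictScalars ℂ I = youngSpan n lam ∧
      Module.finrank ℂ (Rpoly ⧸ I) = n ∧
      mu I = lam.parts.toFinset.card + 1 := by
  set e := Finsupp.finTwoOrderIso ℕ
  set S := e ⁻¹' lam.parts.outerCells
  have hS : IsUpperSet S := lam.parts.isUpperSet_outerCells.preimage e.monotone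
  have hmin := e.setOf_minimal_mem_preimage lam.parts.outerCells
  refine ⟨restrictSupportIdeal ℂ S hS, ?_, ?_, ?_⟩
  · rw [restrictScalars_restrictSupportIdeal, youngSpan_eq]
  · rw [finrank_quotient_restrictSupportIdeal hS
      (lam.parts.finite_compl_outerCells.preimage e.injective.injOn), ← Set.preimage_compl,
      Set.ncard_preimage_equiv e, lam.parts.ncard_compl_outerCells, lam.parts_sum]
  · have h := finrank_map_mk_idealOfVars_mul (K := ℂ) hS
      (hmin ▸ lam.parts.finite_setOf_minimal_mem_outerCells.preimage e.injective.injOn)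
    -- rewritten in `h`, not in the goal: there an instance argument of `mu` mentions `mIdeal`
    rw [← mIdeal_eq_idealOfVars] at h
    rw [mu, h, hmin, Set.ncard_preimage_equiv e,
      lam.parts.ncard_setOf_minimal_mem_outerCells fun h0 => (lam.parts_pos h0).false]

end
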